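/- arXiv:2512.07946 — 2 statements merged into one kernel-verified Lean document; each statement's English description precedes it below -/
import Mathlib

section
/- Let σ > 0. The function ε ↦ ∫_{|t| ≥ ε} (2πσ²)^(-1/2) · exp(-t²/(2σ²)) · |t|^(-1) dt − 2·(2πσ²)^(-1/2)·log(1/ε) converges to a finite limit as ε → 0⁺. -/
open MeasureTheory Filter Topology Set Real
open scoped NNReal

/-!
On each half-line, write `ρ t / t = (ρ t - ρ 0) / t + ρ 0 / t` on `(ε, 1]`. When `ρ` is Lipschitz
near `0` the first term is bounded, so its integral over `(ε, 1]` converges as `ε → 0⁺`; the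
second integrates to exactly `ρ 0 * log (1 / ε)`, and the tail over `(1, ∞)` is finite because `ρ`
is integrable. The two half-lines together give the coefficient `2 * ρ 0`; the Gaussian density
is smooth and integrable, hence such a `ρ`.
-/

theorem tendsto_setIntegral_Ioc_nhdsGT {E : Type*} [NormedAddCommGroup E] [NormedSpace ℝ E]
    {q : ℝ → E} {a b : ℝ} (hab : a < b)
    (hq : IntegrableOn q (Ioc a b)) :
    Tendsto (fun ε => ∫ t in Ioc ε b, q t) (𝓝[>] a) (𝓝 (∫ t in Ioc a b, q t)) := by
  have hcont := intervalIntegral.continuousOn_primitive_interval_left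
    (μ := volume) (f := q) (a := a) (b := b)
    (by rwa [uIcc_of_le hab.le, integrableOn_Icc_iff_integrableOn_Ioc]) a left_mem_uIcc
  have hIoo : Tendsto (fun ε => ∫ t in ε..b, q t) (𝓝[>] a) (𝓝 (∫ t in a..b, q t)) := by
    rw [← nhdsWithin_Ioo_eq_nhdsGT hab]
    exact hcont.mono (uIcc_of_le hab.le ▸ Ioo_subset_Icc_self)
  rw [intervalIntegral.integral_of_le hab.le] at hIoo
  refine hIoo.congr' ?_
  filter_upwards [Ioo_mem_nhdsGT hab] with ε hε
  exact intervalIntegral.integral_of_le hε.2.le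

theorem integrableOn_div_of_le_abs {ρ g : ℝ → ℝ} {s : Set ℝ} {ε : ℝ} (hρ : IntegrableOn ρ s)
    (hs : MeasurableSet s) (hg : Measurable g) (hε : 0 < ε) (hgs : ∀ t ∈ s, ε ≤ |g t|) :
    IntegrableOn (fun t => ρ t / g t) s := by
  simp_rw [div_eq_mul_inv]
  refine hρ.mul_bdd (c := ε⁻¹) hg.inv.aestronglyMeasurable ?_
  filter_upwards [ae_restrict_mem hs] with t ht
  rw [norm_inv, Real.norm_eq_abs]
  exact inv_anti₀ hε (hgs t ht)

theorem integrableOn_sub_div_of_lipschitzOnWith {ρ : ℝ → ℝ} {K : ℝ≥0} {b : ℝ}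
    (hρ : AEStronglyMeasurable ρ (volume.restrict (Ioc 0 b)))
    (hlip : LipschitzOnWith K ρ (Icc 0 b)) :
    IntegrableOn (fun t => (ρ t - ρ 0) / t) (Ioc 0 b) := by
  refine IntegrableOn.of_bound measure_Ioc_lt_top
    ((hρ.sub aestronglyMeasurable_const).div₀ measurable_id.aestronglyMeasurable) K ?_
  filter_upwards [ae_restrict_mem measurableSet_Ioc] with t ht
  have hdist := hlip.dist_le_mul t (Ioc_subset_Icc_self ht) 0 ⟨le_rfl, ht.1.le.trans ht.2⟩
  rw [Real.dist_eq, Real.dist_eq, sub_zero, abs_of_pos ht.1] at hdist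
  rw [norm_div, Real.norm_eq_abs, Real.norm_eq_abs, abs_of_pos ht.1]
  exact div_le_of_le_mul₀ ht.1.le K.2 hdist

theorem exists_tendsto_setIntegral_Ioi_div_sub_log {ρ : ℝ → ℝ} {K : ℝ≥0}
    (hρ : IntegrableOn ρ (Ioi 0)) (hlip : LipschitzOnWith K ρ (Icc 0 1)) :
    ∃ L, Tendsto (fun ε => (∫ t in Ioi ε, ρ t / t) - ρ 0 * log (1 / ε)) (𝓝[>] 0) (𝓝 L) := by
  have hdiv : ∀ ε > 0, IntegrableOn (fun t => ρ t / t) (Ioi ε) := fun ε hε =>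
    integrableOn_div_of_le_abs (hρ.mono_set (Ioi_subset_Ioi hε.le)) measurableSet_Ioi
      measurable_id hε fun t ht => ht.le.trans (le_abs_self t)
  have hsub := integrableOn_sub_div_of_lipschitzOnWith
    (hρ.mono_set Ioc_subset_Ioi_self).aestronglyMeasurable hlip
  refine ⟨(∫ t in Ioc 0 1, (ρ t - ρ 0) / t) + ∫ t in Ioi 1, ρ t / t,
    ((tendsto_setIntegral_Ioc_nhdsGT one_pos hsub).add_const _).congr' ?_⟩
  filter_upwards [Ioo_mem_nhdsGT one_pos] with ε ⟨hε0, hε1⟩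
  have hIoc : IntegrableOn (fun t => ρ t / t) (Ioc ε 1) :=
    (hdiv ε hε0).mono_set Ioc_subset_Ioi_self
  have hsplit : ∫ t in Ioi ε, ρ t / t = (∫ t in Ioc ε 1, ρ t / t) + ∫ t in Ioi 1, ρ t / t := by
    rw [← Ioc_union_Ioi_eq_Ioi hε1.le]
    exact setIntegral_union (Ioc_disjoint_Ioi le_rfl) measurableSet_Ioi hIoc (hdiv 1 one_pos)
  have hlog : ∫ t in Ioc ε 1, ρ 0 * t⁻¹ = ρ 0 * log (1 / ε) := by
    rw [integral_const_mul, ← intervalIntegral.integral_of_le hε1.le,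
      integral_inv_of_pos hε0 one_pos]
  have hdiff : (∫ t in Ioc ε 1, ρ t / t) - ∫ t in Ioc ε 1, (ρ t - ρ 0) / t
      = ∫ t in Ioc ε 1, ρ 0 * t⁻¹ := by
    rw [← integral_sub hIoc (hsub.mono_set (Ioc_subset_Ioc_left hε0.le))]
    congr 1 with t
    ring
  linarith

theorem setIntegral_le_abs_eq_add_comp_neg {E : Type*} [NormedAddCommGroup E] [NormedSpace ℝ E]
    {h : ℝ → E} {ε : ℝ} (hε : 0 < ε) (hh : IntegrableOn h {t | ε ≤ |t|}) :
    ∫ t in {t | ε ≤ |t|}, h t = (∫ t in Ioi ε, h t) + ∫ t in Ioi ε, h (-t) := by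
  have hset : {t : ℝ | ε ≤ |t|} = Ici ε ∪ Iic (-ε) := by
    ext t; simp [le_abs, le_neg]
  rw [integral_comp_neg_Ioi, ← integral_Ici_eq_integral_Ioi, hset]
  rw [hset] at hh
  exact setIntegral_union (Ici_disjoint_Iic.mpr (by linarith)) measurableSet_Iic
    hh.left_of_union hh.right_of_union

theorem exists_tendsto_setIntegral_div_abs_sub_log {ρ : ℝ → ℝ} {K : ℝ≥0}
    (hρ : Integrable ρ) (hlip : LipschitzOnWith K ρ (Icc (-1) 1)) :
    ∃ L, Tendsto (fun ε => (∫ t in {t | ε ≤ |t|}, ρ t / |t|) - 2 * ρ 0 * log (1 / ε))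
      (𝓝[>] 0) (𝓝 L) := by
  obtain ⟨L₁, h₁⟩ := exists_tendsto_setIntegral_Ioi_div_sub_log hρ.integrableOn
    (hlip.mono (Icc_subset_Icc_left (by norm_num)))
  obtain ⟨L₂, h₂⟩ := exists_tendsto_setIntegral_Ioi_div_sub_log (ρ := fun t => ρ (-t))
    hρ.comp_neg.integrableOn
    (hlip.comp isometry_neg.lipschitz.lipschitzOnWith fun t ht =>
      ⟨by linarith [ht.2], by linarith [ht.1]⟩)
  refine ⟨L₁ + L₂, (h₁.add h₂).congr' ?_⟩
  filter_upwards [self_mem_nhdsWithin] with ε (hε : 0 < ε)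
  have habs : ∀ t ∈ Ioi ε, |t| = t := fun t ht => abs_of_pos (hε.trans ht)
  have hpos : ∫ t in Ioi ε, ρ t / |t| = ∫ t in Ioi ε, ρ t / t :=
    setIntegral_congr_fun measurableSet_Ioi fun t ht => by rw [habs t ht]
  have hneg : ∫ t in Ioi ε, ρ (-t) / |-t| = ∫ t in Ioi ε, ρ (-t) / t :=
    setIntegral_congr_fun measurableSet_Ioi fun t ht => by rw [abs_neg, habs t ht]
  rw [setIntegral_le_abs_eq_add_comp_neg hε (integrableOn_div_of_le_abs hρ.integrableOn
      (measurableSet_le measurable_const measurable_abs) measurable_abs hε (by simp)),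
    hpos, hneg, neg_zero]
  ring

theorem renormalized_kernel_at_half
    (σ : ℝ) (hσ : 0 < σ) :
    ∃ L : ℝ, Tendsto (fun ε : ℝ =>
        (∫ t in {t : ℝ | ε ≤ |t|}, (2 * Real.pi * σ ^ 2) ^ (-(1 / 2 : ℝ)) *
            Real.exp (-t ^ 2 / (2 * σ ^ 2)) * |t| ^ (-1 : ℝ)) -
          2 * (2 * Real.pi * σ ^ 2) ^ (-(1 / 2 : ℝ)) * Real.log (1 / ε))
      (𝓝[>] (0 : ℝ)) (𝓝 L) := by
  set c : ℝ := (2 * Real.pi * σ ^ 2) ^ (-(1 / 2 : ℝ))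
  set ρ : ℝ → ℝ := fun t => c * Real.exp (-t ^ 2 / (2 * σ ^ 2)) with hρ_def
  have hρ_int : Integrable ρ := by
    have := (integrable_exp_neg_mul_sq (b := 1 / (2 * σ ^ 2)) (by positivity)).const_mul c
    convert this using 4
    ring
  have hρ_smooth : ContDiff ℝ 1 ρ := by fun_prop
  obtain ⟨K, hK⟩ := (hρ_smooth.contDiffOn (s := Icc (-1) 1)).exists_lipschitzOnWith one_ne_zero
    (convex_Icc _ _) isCompact_Icc
  obtain ⟨L, hL⟩ := exists_tendsto_setIntegral_div_abs_sub_log hρ_int hK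
  refine ⟨L, hL.congr fun ε => ?_⟩
  simp [hρ_def, Real.rpow_neg_one, div_eq_mul_inv]
end

section
/- Let σ > 0 and let Δ be a real number with 1/2 < Δ < 3/2. The function ε ↦ ∫_{|t| ≥ ε} (2πσ²)^(-1/2) · exp(-t²/(2σ²)) · |t|^(-2Δ) dt − (2πσ²)^(-1/2) · (2/(2Δ-1)) · ε^(1-2Δ) converges to a finite limit as ε → 0⁺, where powers are real powers. -/
open MeasureTheory Filter Topology Set

/-!
Write the integrand as `ρ |t| * |t| ^ r` with `ρ t = C * exp (-t² / (2σ²))` and `r = -2Δ`; by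
evenness the regulated integral is twice `∫_{t > ε} ρ t * t ^ r`. On `(ε, 1]` split `ρ t` as
`(ρ t - ρ 0) + ρ 0`: the constant part integrates to `ρ 0 * (1 - ε ^ (r + 1)) / (r + 1)`, which
is exactly the subtracted power divergence plus a constant, while `|ρ t - ρ 0| = O(t²)` makes
`(ρ t - ρ 0) * t ^ r` integrable at `0` as long as `r > -3`, i.e. `Δ < 3/2`. The tail over
`(1, ∞)` converges because `r < -1`, i.e. `Δ > 1/2`.
-/

theorem setIntegral_setOf_le_abs_comp_abs (g : ℝ → ℝ) {ε : ℝ} (hε : 0 < ε) :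
    ∫ t in {t : ℝ | ε ≤ |t|}, g |t| = 2 * ∫ t in Ioi ε, g t := by
  have hind : ∀ t, {t : ℝ | ε ≤ |t|}.indicator (fun t => g |t|) t = (Ici ε).indicator g |t| :=
    fun t => by simp only [indicator_apply, mem_ofPred_eq, mem_Ici]
  rw [← integral_indicator (measurableSet_le measurable_const measurable_abs),
    funext hind, integral_comp_abs, setIntegral_indicator measurableSet_Ici,
    inter_eq_right.mpr (Ici_subset_Ioi.mpr hε), integral_Ici_eq_integral_Ioi]

section Renormalization

variable {ρ : ℝ → ℝ} {r : ℝ}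

theorem integrableOn_Ioc_sub_mul_rpow {K q : ℝ} (hρ : Measurable ρ) (hqr : -1 < q + r)
    (hK : ∀ t ∈ Ioc (0 : ℝ) 1, |ρ t - ρ 0| ≤ K * t ^ q) :
    IntegrableOn (fun t => (ρ t - ρ 0) * t ^ r) (Ioc 0 1) := by
  have hmaj : IntegrableOn (fun t : ℝ => K * t ^ (q + r)) (Ioc 0 1) :=
    (intervalIntegral.intervalIntegrable_rpow' hqr).1.const_mul K
  refine hmaj.mono' ((hρ.sub_const _).mul (measurable_id.pow_const r)).aestronglyMeasurable ?_
  refine (ae_restrict_iff' measurableSet_Ioc).mpr (ae_of_all _ fun t ht => ?_)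
  have ht0 : 0 < t := ht.1
  calc ‖(ρ t - ρ 0) * t ^ r‖ = |ρ t - ρ 0| * t ^ r := by
        rw [Real.norm_eq_abs, abs_mul, abs_of_nonneg (Real.rpow_nonneg ht0.le r)]
    _ ≤ K * t ^ q * t ^ r := by gcongr; exact hK t ht
    _ = K * t ^ (q + r) := by rw [Real.rpow_add ht0]; ring

theorem integrableOn_Ioi_one_mul_rpow {M : ℝ} (hρ : Measurable ρ) (hr : r < -1)
    (hM : ∀ t, |ρ t| ≤ M) : IntegrableOn (fun t => ρ t * t ^ r) (Ioi 1) :=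
  (integrableOn_Ioi_rpow_of_lt hr one_pos).bdd_mul hρ.aestronglyMeasurable (ae_of_all _ hM)

theorem setIntegral_Ioi_mul_rpow_eq (hr : r ≠ -1)
    (h₀ : IntegrableOn (fun t => (ρ t - ρ 0) * t ^ r) (Ioc 0 1))
    (h₁ : IntegrableOn (fun t => ρ t * t ^ r) (Ioi 1)) {ε : ℝ} (hε : 0 < ε) (hε₁ : ε ≤ 1) :
    ∫ t in Ioi ε, ρ t * t ^ r = (∫ t in ε..1, (ρ t - ρ 0) * t ^ r)
      + ρ 0 * ((1 - ε ^ (r + 1)) / (r + 1)) + ∫ t in Ioi 1, ρ t * t ^ r := by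
  have hzero : (0 : ℝ) ∉ uIcc ε 1 := by
    rw [uIcc_of_le hε₁]; exact fun h => hε.not_ge h.1
  have hpow : IntervalIntegrable (fun t => t ^ r) volume ε 1 :=
    intervalIntegral.intervalIntegrable_rpow (Or.inr hzero)
  have hdiff : IntervalIntegrable (fun t => (ρ t - ρ 0) * t ^ r) volume ε 1 :=
    (intervalIntegrable_iff_integrableOn_Ioc_of_le hε₁).mpr
      (h₀.mono_set (Ioc_subset_Ioc_left hε.le))
  have hsplit : (fun t => ρ t * t ^ r) = fun t => (ρ t - ρ 0) * t ^ r + ρ 0 * t ^ r := by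
    funext t; ring
  have hloc : IntegrableOn (fun t => ρ t * t ^ r) (Ioc ε 1) := by
    rw [hsplit]; exact ((hdiff.add (hpow.const_mul (ρ 0))).1)
  rw [← Ioc_union_Ioi_eq_Ioi hε₁, setIntegral_union (Ioc_disjoint_Ioi le_rfl) measurableSet_Ioi
    hloc h₁, ← intervalIntegral.integral_of_le hε₁, hsplit,
    intervalIntegral.integral_add hdiff (hpow.const_mul _), intervalIntegral.integral_const_mul,
    integral_rpow (Or.inr ⟨hr, hzero⟩),
    Real.one_rpow]

theorem exists_tendsto_setIntegral_Ioi_mul_rpow_add (hr : r ≠ -1)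
    (h₀ : IntegrableOn (fun t => (ρ t - ρ 0) * t ^ r) (Ioc 0 1))
    (h₁ : IntegrableOn (fun t => ρ t * t ^ r) (Ioi 1)) :
    ∃ L, Tendsto (fun ε => (∫ t in Ioi ε, ρ t * t ^ r) + ρ 0 * ε ^ (r + 1) / (r + 1))
      (𝓝[>] 0) (𝓝 L) := by
  have hprim : Tendsto (fun ε => ∫ t in ε..1, (ρ t - ρ 0) * t ^ r) (𝓝[>] 0)
      (𝓝 (∫ t in (0 : ℝ)..1, (ρ t - ρ 0) * t ^ r)) := by
    have hcont := intervalIntegral.continuousOn_primitive_interval_left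
      (f := fun t => (ρ t - ρ 0) * t ^ r) (μ := volume)
      (by rwa [uIcc_of_le zero_le_one, integrableOn_Icc_iff_integrableOn_Ioc])
    rw [uIcc_of_le zero_le_one] at hcont
    exact ((hcont 0 (left_mem_Icc.mpr zero_le_one)).tendsto).mono_left
      (nhdsWithin_le_of_mem (Icc_mem_nhdsGT one_pos))
  refine ⟨_, ((hprim.add_const (ρ 0 / (r + 1))).add_const (∫ t in Ioi 1, ρ t * t ^ r)).congr' ?_⟩
  filter_upwards [Ioc_mem_nhdsGT one_pos] with ε hε
  rw [setIntegral_Ioi_mul_rpow_eq hr h₀ h₁ hε.1 hε.2]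
  have : r + 1 ≠ 0 := fun h => hr (by linarith)
  field_simp
  ring

end Renormalization

theorem abs_exp_neg_sub_one_le {x : ℝ} (hx : 0 ≤ x) : |Real.exp (-x) - 1| ≤ x := by
  rw [abs_sub_comm, abs_of_nonneg (sub_nonneg.mpr (Real.exp_le_one_iff.mpr (neg_nonpos.mpr hx)))]
  linarith [Real.one_sub_le_exp_neg x]

theorem abs_mul_exp_neg_sq_div_sub_le (c : ℝ) {s : ℝ} (hs : 0 ≤ s) (t : ℝ) :
    |c * Real.exp (-t ^ 2 / s) - c| ≤ |c| / s * t ^ (2 : ℝ) :=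
  calc |c * Real.exp (-t ^ 2 / s) - c| = |c| * |Real.exp (-(t ^ 2 / s)) - 1| := by
        rw [← abs_mul, mul_sub_one, neg_div]
    _ ≤ |c| * (t ^ 2 / s) := by gcongr; exact abs_exp_neg_sub_one_le (by positivity)
    _ = |c| / s * t ^ (2 : ℝ) := by rw [Real.rpow_two]; ring

theorem abs_mul_exp_neg_sq_div_le (c : ℝ) {s : ℝ} (hs : 0 ≤ s) (t : ℝ) :
    |c * Real.exp (-t ^ 2 / s)| ≤ |c| := by
  rw [abs_mul, Real.abs_exp]
  exact mul_le_of_le_one_right (abs_nonneg c)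
    (Real.exp_le_one_iff.mpr (by rw [neg_div]; exact neg_nonpos.mpr (by positivity)))

theorem renormalized_kernel_beyond_window_general
    (σ : ℝ) (Δ : ℝ) (hΔ₁ : 1 / 2 < Δ) (hΔ₂ : Δ < 3 / 2) :
    ∃ L : ℝ, Tendsto (fun ε : ℝ =>
        (∫ t in {t : ℝ | ε ≤ |t|}, (2 * Real.pi * σ ^ 2) ^ (-(1 / 2 : ℝ)) *
            Real.exp (-t ^ 2 / (2 * σ ^ 2)) * |t| ^ (-(2 * Δ))) -
          (2 * Real.pi * σ ^ 2) ^ (-(1 / 2 : ℝ)) * (2 / (2 * Δ - 1)) * ε ^ (1 - 2 * Δ))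
      (𝓝[>] (0 : ℝ)) (𝓝 L) := by
  set C := (2 * Real.pi * σ ^ 2) ^ (-(1 / 2 : ℝ))
  set ρ : ℝ → ℝ := fun t => C * Real.exp (-t ^ 2 / (2 * σ ^ 2)) with hρ_def
  have hρ : Measurable ρ := by fun_prop
  have hs : 0 ≤ 2 * σ ^ 2 := by positivity
  have h₀ := integrableOn_Ioc_sub_mul_rpow (r := -(2 * Δ)) (q := 2) hρ (by linarith) fun t _ => by
    simpa [hρ_def] using abs_mul_exp_neg_sq_div_sub_le C hs t
  have h₁ := integrableOn_Ioi_one_mul_rpow (r := -(2 * Δ)) hρ (by linarith)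
    (abs_mul_exp_neg_sq_div_le C hs)
  obtain ⟨L, hL⟩ := exists_tendsto_setIntegral_Ioi_mul_rpow_add (by linarith) h₀ h₁
  refine ⟨2 * L, (hL.const_mul 2).congr' ?_⟩
  filter_upwards [self_mem_nhdsWithin] with ε (hε : 0 < ε)
  have hρ₀ : ρ 0 = C := by simp [hρ_def]
  have hsym := setIntegral_setOf_le_abs_comp_abs (fun t => ρ t * t ^ (-(2 * Δ))) hε
  have hint : ∀ t, C * Real.exp (-t ^ 2 / (2 * σ ^ 2)) * |t| ^ (-(2 * Δ))
      = ρ |t| * |t| ^ (-(2 * Δ)) := fun t => by simp only [hρ_def, sq_abs]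
  simp only [hint, hsym]
  rw [hρ₀, show -(2 * Δ) + 1 = 1 - 2 * Δ by ring]
  have hne : 1 - 2 * Δ ≠ 0 := by linarith
  have hne' : 2 * Δ - 1 ≠ 0 := by linarith
  field_simp
  ring

theorem renormalized_kernel_beyond_window
    (σ : ℝ) (hσ : 0 < σ) (Δ : ℝ) (hΔ₁ : 1 / 2 < Δ) (hΔ₂ : Δ < 3 / 2) :
    ∃ L : ℝ, Tendsto (fun ε : ℝ =>
        (∫ t in {t : ℝ | ε ≤ |t|}, (2 * Real.pi * σ ^ 2) ^ (-(1 / 2 : ℝ)) *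
            Real.exp (-t ^ 2 / (2 * σ ^ 2)) * |t| ^ (-(2 * Δ))) -
          (2 * Real.pi * σ ^ 2) ^ (-(1 / 2 : ℝ)) * (2 / (2 * Δ - 1)) * ε ^ (1 - 2 * Δ))
      (𝓝[>] (0 : ℝ)) (𝓝 L) :=
  renormalized_kernel_beyond_window_general σ Δ hΔ₁ hΔ₂
end
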